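/- If A ∈ B(H) satisfies Re(|A||A*|) = O, then w(A) = (1/2)√‖A*A + AA*‖. -/

import Mathlib

open ContinuousLinearMap in
noncomputable def numRad {E : Type*} [NormedAddCommGroup E] [InnerProductSpace ℂ E]
    (T : E →L[ℂ] E) : ℝ :=
  ⨆ x : {x : E // ‖x‖ = 1}, ‖(inner ℂ (T x) (x : E) : ℂ)‖

variable {H : Type*} [NormedAddCommGroup H] [InnerProductSpace ℂ H] [CompleteSpace H]

/-- `|A| = (A*A)^{1/2}`, the positive square root of `A*A`. -/
noncomputable def absOp (A : H →L[ℂ] H) : H →L[ℂ] H :=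
  CFC.sqrt (ContinuousLinearMap.adjoint A * A)

/-- real part of an operator -/
noncomputable def reOp (A : H →L[ℂ] H) : H →L[ℂ] H :=
  (1 / 2 : ℂ) • (A + ContinuousLinearMap.adjoint A)

/-- imaginary part of an operator -/
noncomputable def imOp (A : H →L[ℂ] H) : H →L[ℂ] H :=
  (1 / (2 * Complex.I) : ℂ) • (A - ContinuousLinearMap.adjoint A)

/-- the block diagonal operator `diag(A,B)` on `H ⊕ H` (ℓ²-sum). -/
noncomputable def blockDiag (A B : H →L[ℂ] H) :
    WithLp 2 (H × H) →L[ℂ] WithLp 2 (H × H) :=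
  ((WithLp.prodContinuousLinearEquiv 2 ℂ H H).symm.toContinuousLinearMap).comp
    ((A.prodMap B).comp (WithLp.prodContinuousLinearEquiv 2 ℂ H H).toContinuousLinearMap)

/-- the off-diagonal block operator `[[O,A],[B,O]] : (x,y) ↦ (A y, B x)` on `H ⊕ H`. -/
noncomputable def blockOffDiag (A B : H →L[ℂ] H) :
    WithLp 2 (H × H) →L[ℂ] WithLp 2 (H × H) :=
  ((WithLp.prodContinuousLinearEquiv 2 ℂ H H).symm.toContinuousLinearMap).comp
    (((A.prodMap B).comp (ContinuousLinearEquiv.prodComm ℂ H H).toContinuousLinearMap).comp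
      (WithLp.prodContinuousLinearEquiv 2 ℂ H H).toContinuousLinearMap)

/-!
The lower bound `‖A*A + AA*‖ ≤ 4 w(A)²` holds for every operator: with `A = Re A + i Im A`, the
parallelogram law gives `‖A x‖² + ‖A* x‖² = 2 (‖Re A x‖² + ‖Im A x‖²)`, and the self-adjoint
operators `Re A`, `Im A` have norm equal to their numerical radius, which is at most `w(A)`.
The upper bound `w(A) ≤ ½ ‖|A| + |A*|‖` (Kittaneh) follows from the mixed Schwarz inequality
`|⟨A x, x⟩|² ≤ ⟨|A| x, x⟩ ⟨|A*| x, x⟩` and AM-GM. If `Re(|A| |A*|) = 0`, then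
`(|A| + |A*|)² = A*A + AA*`, so by the C*-identity the two bounds coincide.
-/

open ContinuousLinearMap
open scoped InnerProductSpace

section NumericalRadius

variable {E : Type*} [NormedAddCommGroup E] [InnerProductSpace ℂ E]

theorem norm_inner_apply_self_le_opNorm_mul_sq (T : E →L[ℂ] E) (x : E) :
    ‖⟪T x, x⟫_ℂ‖ ≤ ‖T‖ * ‖x‖ ^ 2 := by
  grw [norm_inner_le_norm, le_opNorm, mul_assoc, ← sq]

theorem bddAbove_range_norm_inner_apply_self (T : E →L[ℂ] E) :
    BddAbove (Set.range fun x : {x : E // ‖x‖ = 1} => ‖⟪T x, (x : E)⟫_ℂ‖) :=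
  ⟨‖T‖, by
    rintro _ ⟨x, rfl⟩
    simpa [x.2] using norm_inner_apply_self_le_opNorm_mul_sq T x⟩

theorem numRad_nonneg (T : E →L[ℂ] E) : 0 ≤ numRad T :=
  Real.iSup_nonneg fun _ => norm_nonneg _

theorem norm_inner_apply_self_le_numRad (T : E →L[ℂ] E) {x : E} (hx : ‖x‖ = 1) :
    ‖⟪T x, x⟫_ℂ‖ ≤ numRad T :=
  le_ciSup (bddAbove_range_norm_inner_apply_self T) ⟨x, hx⟩

theorem numRad_le {T : E →L[ℂ] E} {c : ℝ} (hc : 0 ≤ c)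
    (h : ∀ x : E, ‖x‖ = 1 → ‖⟪T x, x⟫_ℂ‖ ≤ c) : numRad T ≤ c :=
  Real.iSup_le (fun x => h x x.2) hc

theorem norm_inner_apply_self_le_numRad_mul_sq (T : E →L[ℂ] E) (x : E) :
    ‖⟪T x, x⟫_ℂ‖ ≤ numRad T * ‖x‖ ^ 2 := by
  rcases eq_or_ne x 0 with rfl | hx
  · simp
  have hx' : ‖x‖ ≠ 0 := norm_ne_zero_iff.2 hx
  have hunit : ‖(‖x‖⁻¹ : ℂ) • x‖ = 1 := by simp [norm_smul, hx']
  have := norm_inner_apply_self_le_numRad T hunit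
  rw [map_smul, inner_smul_left, inner_smul_right, norm_mul, norm_mul, map_inv₀,
    Complex.conj_ofReal, norm_inv, Complex.norm_real, norm_norm, ← mul_assoc, ← sq, inv_pow,
    inv_mul_le_iff₀ (by positivity)] at this
  linarith

theorem numRad_add_le (S T : E →L[ℂ] E) : numRad (S + T) ≤ numRad S + numRad T :=
  numRad_le (add_nonneg (numRad_nonneg S) (numRad_nonneg T)) fun x hx => by
    rw [add_apply, inner_add_left]
    exact (norm_add_le _ _).trans (add_le_add (norm_inner_apply_self_le_numRad S hx)
      (norm_inner_apply_self_le_numRad T hx))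

theorem numRad_sub_le (S T : E →L[ℂ] E) : numRad (S - T) ≤ numRad S + numRad T :=
  numRad_le (add_nonneg (numRad_nonneg S) (numRad_nonneg T)) fun x hx => by
    rw [sub_apply, inner_sub_left]
    exact (norm_sub_le _ _).trans (add_le_add (norm_inner_apply_self_le_numRad S hx)
      (norm_inner_apply_self_le_numRad T hx))

theorem numRad_smul_le (c : ℂ) (T : E →L[ℂ] E) : numRad (c • T) ≤ ‖c‖ * numRad T :=
  numRad_le (mul_nonneg (norm_nonneg c) (numRad_nonneg T)) fun x hx => by
    rw [smul_apply, inner_smul_left, norm_mul, RCLike.norm_conj]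
    exact mul_le_mul_of_nonneg_left (norm_inner_apply_self_le_numRad T hx) (norm_nonneg c)

theorem norm_le_numRad_of_isSymmetric {T : E →L[ℂ] E} (hT : T.IsSymmetric) :
    ‖T‖ ≤ numRad T := by
  rw [norm_eq_iSup_rayleighQuotient T hT]
  refine ciSup_le fun x => ?_
  rcases eq_or_ne x 0 with rfl | hx
  · simpa using numRad_nonneg T
  rw [rayleighQuotient, abs_div, abs_sq, div_le_iff₀ (by positivity), reApplyInnerSelf_apply]
  exact (RCLike.abs_re_le_norm _).trans (norm_inner_apply_self_le_numRad_mul_sq T x)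

end NumericalRadius

section Cartesian

theorem numRad_adjoint (T : H →L[ℂ] H) : numRad (adjoint T) = numRad T := by
  unfold numRad
  congr! 2 with x
  rw [adjoint_inner_left, ← inner_conj_symm, RCLike.norm_conj]

theorem numRad_reOp_le (A : H →L[ℂ] H) : numRad (reOp A) ≤ numRad A := by
  unfold reOp
  grw [numRad_smul_le, numRad_add_le, numRad_adjoint]
  norm_num
  linarith

theorem numRad_imOp_le (A : H →L[ℂ] H) : numRad (imOp A) ≤ numRad A := by
  unfold imOp
  grw [numRad_smul_le, numRad_sub_le, numRad_adjoint]
  norm_num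
  linarith

theorem isSelfAdjoint_reOp (A : H →L[ℂ] H) : IsSelfAdjoint (reOp A) := by
  simp [reOp, IsSelfAdjoint, star_eq_adjoint, add_comm]

theorem isSelfAdjoint_imOp (A : H →L[ℂ] H) : IsSelfAdjoint (imOp A) := by
  simp [imOp, IsSelfAdjoint, star_eq_adjoint, ← smul_neg]

theorem reOp_add_I_smul_imOp (A : H →L[ℂ] H) : reOp A + Complex.I • imOp A = A := by
  rw [reOp, imOp, smul_smul, mul_one_div, div_mul_cancel_right₀ Complex.I_ne_zero]
  module

theorem reOp_sub_I_smul_imOp (A : H →L[ℂ] H) : reOp A - Complex.I • imOp A = adjoint A := by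
  rw [reOp, imOp, smul_smul, mul_one_div, div_mul_cancel_right₀ Complex.I_ne_zero]
  module

theorem norm_apply_sq_add_norm_adjoint_apply_sq (A : H →L[ℂ] H) (x : H) :
    ‖A x‖ ^ 2 + ‖adjoint A x‖ ^ 2 = 2 * (‖reOp A x‖ ^ 2 + ‖imOp A x‖ ^ 2) := by
  have hA : A x = reOp A x + Complex.I • imOp A x := by
    conv_lhs => rw [← reOp_add_I_smul_imOp A]
    rfl
  have hA' : adjoint A x = reOp A x - Complex.I • imOp A x := by
    rw [← reOp_sub_I_smul_imOp A]
    rfl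
  have := parallelogram_law_with_norm ℂ (reOp A x) (Complex.I • imOp A x)
  rw [norm_smul, Complex.norm_I, one_mul, ← hA, ← hA'] at this
  linear_combination this

theorem inner_adjoint_mul_add_mul_adjoint_apply (A : H →L[ℂ] H) (x : H) :
    ⟪(adjoint A * A + A * adjoint A) x, x⟫_ℂ = ((‖A x‖ ^ 2 + ‖adjoint A x‖ ^ 2 : ℝ) : ℂ) := by
  rw [add_apply, inner_add_left, mul_apply_eq_comp, mul_apply_eq_comp, adjoint_inner_left,
    ← adjoint_inner_right A (adjoint A x) x]
  push_cast
  rw [inner_self_eq_norm_sq_to_K, inner_self_eq_norm_sq_to_K]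
  rfl

theorem norm_adjoint_mul_add_mul_adjoint_le (A : H →L[ℂ] H) :
    ‖adjoint A * A + A * adjoint A‖ ≤ 4 * numRad A ^ 2 := by
  have hsa : IsSelfAdjoint (adjoint A * A + A * adjoint A) := by
    simpa only [star_eq_adjoint] using
      (IsSelfAdjoint.star_mul_self A).add (IsSelfAdjoint.mul_star_self A)
  have hpart : ∀ R : H →L[ℂ] H, IsSelfAdjoint R → numRad R ≤ numRad A → ∀ x : H, ‖x‖ = 1 →
      ‖R x‖ ≤ numRad A := fun R hR hRA x hx =>
    (R.le_opNorm x).trans <| by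
      rw [hx, mul_one]
      exact (norm_le_numRad_of_isSymmetric hR.isSymmetric).trans hRA
  refine (norm_le_numRad_of_isSymmetric hsa.isSymmetric).trans
    (numRad_le (by positivity) fun x hx => ?_)
  rw [inner_adjoint_mul_add_mul_adjoint_apply, Complex.norm_real,
    Real.norm_of_nonneg (by positivity), norm_apply_sq_add_norm_adjoint_apply_sq]
  have hre := hpart _ (isSelfAdjoint_reOp A) (numRad_reOp_le A) x hx
  have him := hpart _ (isSelfAdjoint_imOp A) (numRad_imOp_le A) x hx
  nlinarith [norm_nonneg (reOp A x), norm_nonneg (imOp A x)]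

end Cartesian

open Polynomial in
theorem SemiconjBy.aeval {R 𝓐 : Type*} [CommSemiring R] [Semiring 𝓐] [Algebra R 𝓐] {x a b : 𝓐}
    (h : SemiconjBy x a b) (p : R[X]) : SemiconjBy x (aeval a p) (aeval b p) := by
  induction p using Polynomial.induction_on' with
  | add p q hp hq => simpa only [map_add] using hp.add_right hq
  | monomial n r =>
    simp only [aeval_monomial]
    exact SemiconjBy.mul_right (Algebra.commute_algebraMap_right r x) (h.pow_right n)

open Filter Topology in
theorem SemiconjBy.cfc_of_nonneg {𝓐 : Type*} [CStarAlgebra 𝓐] [PartialOrder 𝓐]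
    [StarOrderedRing 𝓐] {x a b : 𝓐} (h : SemiconjBy x a b) (ha : 0 ≤ a) (hb : 0 ≤ b)
    {f : ℝ → ℝ} (hf : ContinuousOn f (Set.Ici 0)) : SemiconjBy x (cfc f a) (cfc f b) := by
  obtain ⟨R, hR⟩ : ∃ R, spectrum ℝ a ∪ spectrum ℝ b ⊆ Set.Icc 0 R := by
    obtain ⟨R, hR⟩ :=
      ((spectrum.isCompact (𝕜 := ℝ) a).union (spectrum.isCompact (𝕜 := ℝ) b)).bddAbove
    refine ⟨R, fun t ht => ⟨?_, hR ht⟩⟩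
    rcases ht with ht | ht
    exacts [spectrum_nonneg_of_nonneg ha ht, spectrum_nonneg_of_nonneg hb ht]
  choose p hp using fun n : ℕ => exists_polynomial_near_of_continuousOn 0 R f
    (hf.mono Set.Icc_subset_Ici_self) (1 / (n + 1)) Nat.one_div_pos_of_nat
  have happrox : ∀ c : 𝓐, spectrum ℝ c ⊆ Set.Icc 0 R → IsSelfAdjoint c →
      Tendsto (fun n => Polynomial.aeval c (p n)) atTop (𝓝 (cfc f c)) := by
    intro c hc hsa
    have hunif : TendstoUniformlyOn (fun n t => (p n).eval t) f atTop (spectrum ℝ c) := by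
      refine Metric.tendstoUniformlyOn_iff.2 fun ε hε => ?_
      obtain ⟨N, hN⟩ := exists_nat_one_div_lt hε
      filter_upwards [eventually_ge_atTop N] with n hn t ht
      rw [Real.dist_eq, abs_sub_comm]
      refine (hp n t (hc ht)).trans_le (le_trans ?_ hN.le)
      gcongr
    exact (tendsto_congr fun n => cfc_polynomial (p n) c hsa).1
      (tendsto_cfc_fun hunif (.of_forall fun n => (p n).continuousOn))
  refine tendsto_nhds_unique
    ((happrox a (Set.subset_union_left.trans hR) ha.isSelfAdjoint).const_mul x) ?_
  simpa only [(h.aeval _).eq] using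
    (happrox b (Set.subset_union_right.trans hR) hb.isSelfAdjoint).mul_const x

theorem norm_add_sq_eq_norm_mul_self_add_mul_self {𝓐 : Type*} [NonUnitalNormedRing 𝓐]
    [StarRing 𝓐] [CStarRing 𝓐] {a b : 𝓐} (ha : IsSelfAdjoint a) (hb : IsSelfAdjoint b)
    (hab : a * b + b * a = 0) : ‖a + b‖ ^ 2 = ‖a * a + b * b‖ := by
  have hsq : (a + b) * (a + b) = a * a + b * b := by
    rw [← add_zero (a * a + b * b), ← hab]
    noncomm_ring
  rw [sq, ← CStarRing.norm_star_mul_self, (ha.add hb).star_eq, hsq]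

section AbsoluteValue

theorem absOp_nonneg (A : H →L[ℂ] H) : 0 ≤ absOp A := CFC.sqrt_nonneg _

theorem re_inner_absOp_apply_self_nonneg (A : H →L[ℂ] H) (x : H) :
    0 ≤ RCLike.re ⟪absOp A x, x⟫_ℂ :=
  ((nonneg_iff_isPositive _).1 (absOp_nonneg A)).re_inner_nonneg_left x

theorem absOp_mul_self (A : H →L[ℂ] H) : absOp A * absOp A = adjoint A * A :=
  CFC.sqrt_mul_sqrt_self _ (by simpa only [star_eq_adjoint] using star_mul_self_nonneg A)

theorem semiconjBy_absOp (A : H →L[ℂ] H) : SemiconjBy A (absOp A) (absOp (adjoint A)) := by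
  have h₁ : 0 ≤ adjoint A * A := by simpa only [star_eq_adjoint] using star_mul_self_nonneg A
  have h₂ : 0 ≤ A * adjoint A := by simpa only [star_eq_adjoint] using mul_star_self_nonneg A
  rw [absOp, absOp, adjoint_adjoint, CFC.sqrt_eq_real_sqrt _ h₁, CFC.sqrt_eq_real_sqrt _ h₂,
    cfcₙ_eq_cfc, cfcₙ_eq_cfc]
  exact SemiconjBy.cfc_of_nonneg (mul_assoc A (adjoint A) A).symm h₁ h₂
    Real.continuous_sqrt.continuousOn

end AbsoluteValue

section MixedSchwarz

theorem re_inner_apply_self_le_of_le {E : Type*} [NormedAddCommGroup E] [InnerProductSpace ℂ E]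
    {S T : E →L[ℂ] E} (h : S ≤ T) (x : E) :
    RCLike.re ⟪S x, x⟫_ℂ ≤ RCLike.re ⟪T x, x⟫_ℂ := by
  have := ((le_def S T).1 h).re_inner_nonneg_left x
  rw [sub_apply, inner_sub_left, map_sub] at this
  linarith

theorem IsSelfAdjoint.norm_apply_sq {T : H →L[ℂ] H} (hT : IsSelfAdjoint T) (x : H) :
    ‖T x‖ ^ 2 = RCLike.re ⟪(T * T) x, x⟫_ℂ := by
  rw [apply_norm_sq_eq_inner_adjoint_left, ← star_eq_adjoint, hT.star_eq]
  rfl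

/-- Cauchy–Schwarz after splitting `⟪y, x⟫ = ⟪h(Q)^{-1/2} y, h(Q)^{1/2} x⟫`. -/
theorem sq_norm_inner_le_re_inner_cfc_inv_mul {Q : H →L[ℂ] H} (hQ : IsSelfAdjoint Q)
    {h : ℝ → ℝ} (hcont : ContinuousOn h (spectrum ℝ Q)) (hpos : ∀ t ∈ spectrum ℝ Q, 0 < h t)
    (x y : H) :
    ‖⟪y, x⟫_ℂ‖ ^ 2 ≤ RCLike.re ⟪cfc h⁻¹ Q y, y⟫_ℂ * RCLike.re ⟪cfc h Q x, x⟫_ℂ := by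
  have hsqrt : ContinuousOn (fun t => √(h t)) (spectrum ℝ Q) :=
    Real.continuous_sqrt.comp_continuousOn hcont
  have hsqrt_inv : ContinuousOn (fun t => (√(h t))⁻¹) (spectrum ℝ Q) :=
    hsqrt.inv₀ fun t ht => (Real.sqrt_pos.2 (hpos t ht)).ne'
  set r := cfc (fun t => √(h t)) Q
  set s := cfc (fun t => (√(h t))⁻¹) Q
  have hsr : s * r = 1 := by
    rw [← cfc_mul _ _ Q hsqrt_inv hsqrt, ← cfc_one ℝ Q]
    exact cfc_congr fun t ht => inv_mul_cancel₀ (Real.sqrt_pos.2 (hpos t ht)).ne'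
  have hrr : r * r = cfc h Q := by
    rw [← cfc_mul _ _ Q hsqrt hsqrt]
    exact cfc_congr fun t ht => Real.mul_self_sqrt (hpos t ht).le
  have hss : s * s = cfc h⁻¹ Q := by
    rw [← cfc_mul _ _ Q hsqrt_inv hsqrt_inv]
    refine cfc_congr fun t ht => ?_
    rw [← mul_inv, Real.mul_self_sqrt (hpos t ht).le, Pi.inv_apply]
  have hs : IsSelfAdjoint s := cfc_predicate _ Q
  have hr : IsSelfAdjoint r := cfc_predicate _ Q
  have hsplit : ⟪y, x⟫_ℂ = ⟪s y, r x⟫_ℂ := by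
    rw [← adjoint_inner_right, ← star_eq_adjoint, hs.star_eq, ← mul_apply_eq_comp, hsr,
      one_apply_eq_self]
  calc ‖⟪y, x⟫_ℂ‖ ^ 2 ≤ (‖s y‖ * ‖r x‖) ^ 2 := by
        rw [hsplit]; gcongr; exact norm_inner_le_norm _ _
    _ = RCLike.re ⟪cfc h⁻¹ Q y, y⟫_ℂ * RCLike.re ⟪cfc h Q x, x⟫_ℂ := by
        rw [mul_pow, hs.norm_apply_sq, hr.norm_apply_sq, hss, hrr]

/-- `A* (|A*| + ε)⁻¹ A = A*A (|A| + ε)⁻¹ = |A|² (|A| + ε)⁻¹ ≤ |A|`. -/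
theorem re_inner_cfc_inv_absOp_adjoint_apply_le (A : H →L[ℂ] H) {ε : ℝ} (hε : 0 < ε) (x : H) :
    RCLike.re ⟪cfc (fun t => t + ε)⁻¹ (absOp (adjoint A)) (A x), A x⟫_ℂ ≤
      RCLike.re ⟪absOp A x, x⟫_ℂ := by
  set P := absOp A
  have hP := absOp_nonneg A
  have hcont : ContinuousOn (fun t : ℝ => t + ε)⁻¹ (Set.Ici 0) :=
    (continuousOn_id.add continuousOn_const).inv₀ fun t (ht : 0 ≤ t) =>
      (add_pos_of_nonneg_of_pos ht hε).ne'
  have hintertwine := (semiconjBy_absOp A).cfc_of_nonneg hP (absOp_nonneg _) hcont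
  have hkey : ⟪cfc (fun t => t + ε)⁻¹ (absOp (adjoint A)) (A x), A x⟫_ℂ =
      ⟪(P * P * cfc (fun t => t + ε)⁻¹ P) x, x⟫_ℂ := by
    rw [← mul_apply_eq_comp, ← hintertwine.eq, absOp_mul_self, mul_assoc,
      mul_apply_eq_comp (adjoint A), adjoint_inner_left]
  have hle : P * P * cfc (fun t => t + ε)⁻¹ P ≤ P := by
    have hcont' : ContinuousOn (fun t : ℝ => t + ε)⁻¹ (spectrum ℝ P) :=
      hcont.mono fun t ht => spectrum_nonneg_of_nonneg hP ht
    have hfun : P * P * cfc (fun t => t + ε)⁻¹ P =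
        cfc (fun t => t * t * (fun t => t + ε)⁻¹ t) P := by
      rw [cfc_mul _ _ P (by fun_prop) hcont', cfc_mul (fun t => t) (fun t => t) P, cfc_id' ℝ P]
    rw [hfun]
    conv_rhs => rw [← cfc_id' ℝ P]
    refine cfc_mono fun t ht => ?_
    have ht : 0 ≤ t := spectrum_nonneg_of_nonneg hP ht
    rw [Pi.inv_apply, mul_inv_le_iff₀ (by positivity)]
    nlinarith
  rw [hkey]
  exact re_inner_apply_self_le_of_le hle x

/-- Regularising `|A*|` to the invertible `|A*| + ε` takes the place of the polar decomposition
in the classical proof of the mixed Schwarz inequality. -/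
theorem sq_norm_inner_le_re_inner_absOp_mul_add (A : H →L[ℂ] H) (x : H) {ε : ℝ} (hε : 0 < ε) :
    ‖⟪A x, x⟫_ℂ‖ ^ 2 ≤
      RCLike.re ⟪absOp A x, x⟫_ℂ * (RCLike.re ⟪absOp (adjoint A) x, x⟫_ℂ + ε * ‖x‖ ^ 2) := by
  have hQ := absOp_nonneg (adjoint A)
  have hpos : ∀ t ∈ spectrum ℝ (absOp (adjoint A)), 0 < t + ε := fun t ht =>
    add_pos_of_nonneg_of_pos (spectrum_nonneg_of_nonneg hQ ht) hε
  have hcs := sq_norm_inner_le_re_inner_cfc_inv_mul hQ.isSelfAdjoint (by fun_prop) hpos x (A x)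
  have hshift : RCLike.re ⟪cfc (fun t => t + ε) (absOp (adjoint A)) x, x⟫_ℂ =
      RCLike.re ⟪absOp (adjoint A) x, x⟫_ℂ + ε * ‖x‖ ^ 2 := by
    rw [cfc_add_const ε (fun t => t) _, cfc_id' ℝ _, add_apply, inner_add_left, map_add,
      Algebra.algebraMap_eq_smul_one, smul_apply, one_apply_eq_self, inner_smul_left_eq_smul,
      RCLike.smul_re, inner_self_eq_norm_sq]
  rw [hshift] at hcs
  refine hcs.trans (mul_le_mul_of_nonneg_right (re_inner_cfc_inv_absOp_adjoint_apply_le A hε x) ?_)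
  have := re_inner_absOp_apply_self_nonneg (adjoint A) x
  positivity

open Filter Topology in
theorem sq_norm_inner_le_re_inner_absOp_mul (A : H →L[ℂ] H) (x : H) :
    ‖⟪A x, x⟫_ℂ‖ ^ 2 ≤ RCLike.re ⟪absOp A x, x⟫_ℂ * RCLike.re ⟪absOp (adjoint A) x, x⟫_ℂ := by
  have hcont : Continuous fun ε : ℝ => RCLike.re ⟪absOp A x, x⟫_ℂ *
      (RCLike.re ⟪absOp (adjoint A) x, x⟫_ℂ + ε * ‖x‖ ^ 2) := by fun_prop
  have hlim := (hcont.continuousWithinAt (s := Set.Ioi 0) (x := 0)).tendsto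
  rw [zero_mul, add_zero] at hlim
  exact ge_of_tendsto hlim (eventually_nhdsWithin_of_forall fun ε hε =>
    sq_norm_inner_le_re_inner_absOp_mul_add A x hε)

end MixedSchwarz

theorem numRad_le_half_norm_absOp_add_absOp (A : H →L[ℂ] H) :
    numRad A ≤ 1 / 2 * ‖absOp A + absOp (adjoint A)‖ :=
  numRad_le (by positivity) fun x hx => by
    have hp := re_inner_absOp_apply_self_nonneg A x
    have hq := re_inner_absOp_apply_self_nonneg (adjoint A) x
    have hsum := (RCLike.re_le_norm _).trans
      (norm_inner_apply_self_le_opNorm_mul_sq (absOp A + absOp (adjoint A)) x)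
    rw [hx, add_apply, inner_add_left, map_add, one_pow, mul_one] at hsum
    rw [← pow_le_pow_iff_left₀ (norm_nonneg _) (by positivity) two_ne_zero]
    nlinarith [sq_nonneg (RCLike.re ⟪absOp A x, x⟫_ℂ - RCLike.re ⟪absOp (adjoint A) x, x⟫_ℂ),
      sq_norm_inner_le_re_inner_absOp_mul A x]

theorem numRad_eq_of_re_abs_mul_eq_zero (A : H →L[ℂ] H)
    (h : reOp (absOp A * absOp (ContinuousLinearMap.adjoint A)) = 0) :
    numRad A = (1 / 2) * Real.sqrt
      ‖ContinuousLinearMap.adjoint A * A + A * ContinuousLinearMap.adjoint A‖ := by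
  have hP := (absOp_nonneg A).isSelfAdjoint
  have hQ := (absOp_nonneg (adjoint A)).isSelfAdjoint
  have hanti : absOp A * absOp (adjoint A) + absOp (adjoint A) * absOp A = 0 := by
    rw [reOp, smul_eq_zero, ← star_eq_adjoint (absOp A * absOp (adjoint A)), star_mul, hP.star_eq,
      hQ.star_eq] at h
    exact h.resolve_left (by norm_num)
  have hsq : ‖absOp A + absOp (adjoint A)‖ = √‖adjoint A * A + A * adjoint A‖ := by
    rw [← Real.sqrt_sq (norm_nonneg _), norm_add_sq_eq_norm_mul_self_add_mul_self hP hQ hanti,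
      absOp_mul_self, absOp_mul_self, adjoint_adjoint]
  have hupper := numRad_le_half_norm_absOp_add_absOp A
  have hlower : √‖adjoint A * A + A * adjoint A‖ ≤ 2 * numRad A :=
    Real.sqrt_le_iff.2 ⟨by linarith [numRad_nonneg A],
      by linarith [norm_adjoint_mul_add_mul_adjoint_le A]⟩
  rw [hsq] at hupper
  linarith
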